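/- Fix a squarefree integer n > 0, let K = ℚ(√−n) ⊆ ℂ (with √−n = i√n), let O be the ring of integers of K, and let 𝒲 be the subgroup of SL(2,O) generated by the Cohn matrices W(α), α ∈ O. Set u = √−n, so u·conj(u) = n. Then for every γ ∈ 𝒲 with entries γ = [[a, b], [c, d]]: (i) c·u·conj(d) − d·u·conj(c) ∈ nℤ; (ii) a·u·conj(b) − b·u·conj(a) ∈ nℤ; (iii) a·u·conj(d) − b·u·conj(c) − u ∈ nO. -/
import Mathlib


open Matrix Complex

/-- The ring of integers of `K = ℚ(√−n) ⊆ ℂ`: the elements of the subfield of `ℂ`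
generated by `√−n = i√n` that are integral over `ℤ`. -/
noncomputable def quadIntRing (n : ℕ) : Subring ℂ :=
  (Subfield.closure {Complex.I * (Real.sqrt n : ℂ)}).toSubring ⊓
    (integralClosure ℤ ℂ).toSubring

/-- The Cohn matrix `W(α) = [[α, 1], [−1, 0]]` as an element of `SL(2,ℂ)`. -/
def CohnMatrix (a : ℂ) : Matrix.SpecialLinearGroup (Fin 2) ℂ :=
  ⟨!![a, 1; -1, 0], by simp [Matrix.det_fin_two_of]⟩

/-- `𝒲`: the subgroup generated by the Cohn matrices `W(α)`, `α ∈ O`. -/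
noncomputable def CohnSubgroup (n : ℕ) : Subgroup (Matrix.SpecialLinearGroup (Fin 2) ℂ) :=
  Subgroup.closure {γ | ∃ α ∈ quadIntRing n, γ = CohnMatrix α}

namespace CohnAux

noncomputable def uu (n : ℕ) : ℂ := Complex.I * (Real.sqrt n : ℂ)

lemma conj_uu (n : ℕ) : (starRingEnd ℂ) (uu n) = - uu n := by
  simp [uu]

lemma uu_sq (n : ℕ) : uu n * uu n = -(n : ℂ) := by
  have h : ((Real.sqrt n : ℝ) : ℂ) * ((Real.sqrt n : ℝ) : ℂ) = (n : ℂ) := by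
    rw [← Complex.ofReal_mul, Real.mul_self_sqrt (by positivity)]
    norm_num
  calc uu n * uu n = Complex.I * Complex.I * (((Real.sqrt n : ℝ) : ℂ) * ((Real.sqrt n : ℝ) : ℂ)) := by
        rw [uu]; ring
    _ = -(n : ℂ) := by rw [Complex.I_mul_I, h]; ring

lemma uu_ne {n : ℕ} (hn : 0 < n) : uu n ≠ 0 := by
  intro h
  have := uu_sq n
  rw [h, mul_zero] at this
  have h2 : (n : ℂ) = 0 := by linear_combination this
  simp at h2
  omega

lemma mem_quadIntRing_iff {n : ℕ} {z : ℂ} :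
    z ∈ quadIntRing n ↔ z ∈ Subfield.closure {uu n} ∧ IsIntegral ℤ z := by
  rw [quadIntRing, Subring.mem_inf, Subfield.mem_toSubring, Subalgebra.mem_toSubring,
    mem_integralClosure_iff]
  rfl

lemma uu_mem (n : ℕ) : uu n ∈ quadIntRing n := by
  rw [mem_quadIntRing_iff]
  refine ⟨Subfield.subset_closure rfl, ?_⟩
  refine ⟨Polynomial.X ^ 2 + Polynomial.C (n : ℤ), Polynomial.monic_X_pow_add_C _ two_ne_zero, ?_⟩
  simp only [Polynomial.eval₂_add, Polynomial.eval₂_pow, Polynomial.eval₂_X, Polynomial.eval₂_C]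
  have := uu_sq n
  simp only [eq_intCast, Int.cast_natCast]
  linear_combination this

lemma conj_mem_closure {n : ℕ} {z : ℂ} (h : z ∈ Subfield.closure {uu n}) :
    (starRingEnd ℂ) z ∈ Subfield.closure {uu n} := by
  induction h using Subfield.closure_induction with
  | mem x hx =>
    rcases hx with rfl
    rw [conj_uu]
    exact neg_mem (Subfield.subset_closure rfl)
  | one => rw [_root_.map_one]; exact one_mem _
  | add x y _ _ hx hy => rw [map_add]; exact add_mem hx hy
  | neg x _ hx => rw [map_neg]; exact neg_mem hx
  | inv x _ hx => rw [map_inv₀]; exact inv_mem hx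
  | mul x y _ _ hx hy => rw [_root_.map_mul]; exact mul_mem hx hy

lemma conj_mem {n : ℕ} {z : ℂ} (hz : z ∈ quadIntRing n) :
    (starRingEnd ℂ) z ∈ quadIntRing n := by
  rw [mem_quadIntRing_iff] at hz ⊢
  exact ⟨conj_mem_closure hz.1, hz.2.map ((starRingEnd ℂ) : ℂ →+* ℂ).toIntAlgHom⟩


lemma exists_rat {n : ℕ} (hn : 0 < n) {z : ℂ} (hz : z ∈ Subfield.closure {uu n}) :
    ∃ x y : ℚ, z = (x : ℂ) + (y : ℂ) * uu n := by
  induction hz using Subfield.closure_induction with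
  | mem x hx =>
    rcases hx with rfl
    exact ⟨0, 1, by norm_num⟩
  | one => exact ⟨1, 0, by norm_num⟩
  | add x y _ _ hx hy =>
    obtain ⟨p, q, rfl⟩ := hx; obtain ⟨r, s, rfl⟩ := hy
    exact ⟨p + r, q + s, by push_cast; ring⟩
  | neg x _ hx =>
    obtain ⟨p, q, rfl⟩ := hx
    exact ⟨-p, -q, by push_cast; ring⟩
  | inv x _ hx =>
    obtain ⟨p, q, rfl⟩ := hx
    by_cases h0 : (p : ℂ) + (q : ℂ) * uu n = 0
    · rw [h0]; exact ⟨0, 0, by norm_num⟩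
    · set D : ℚ := p ^ 2 + n * q ^ 2 with hD
      have hq : (0:ℚ) < n := by exact_mod_cast hn
      have hDne : D ≠ 0 := by
        intro hD0
        have h2 : (n:ℚ) * q ^ 2 = 0 := by
          nlinarith [sq_nonneg p, sq_nonneg q, mul_nonneg hq.le (sq_nonneg q)]
        have hq0 : q = 0 := by
          have := (mul_eq_zero.mp h2).resolve_left (ne_of_gt hq)
          exact pow_eq_zero_iff two_ne_zero |>.mp this
        have hp0 : p = 0 := by nlinarith [sq_nonneg p]
        exact h0 (by rw [hp0, hq0]; norm_num)
      refine ⟨p / D, -q / D, ?_⟩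
      have key : ((p : ℂ) + (q : ℂ) * uu n) * (((p / D : ℚ) : ℂ) + ((-q / D : ℚ) : ℂ) * uu n) = 1 := by
        have hDC : ((D : ℚ) : ℂ) ≠ 0 := by exact_mod_cast hDne
        have expand : ((p / D : ℚ) : ℂ) = (p : ℂ) / (D : ℂ) := by push_cast; ring
        have expand2 : ((-q / D : ℚ) : ℂ) = -(q : ℂ) / (D : ℂ) := by push_cast; ring
        have hDC2 : ((D : ℚ) : ℂ) = (p:ℂ)^2 + (n:ℂ) * (q:ℂ)^2 := by
          rw [hD]; push_cast; ring
        rw [expand, expand2]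
        field_simp
        linear_combination (-(q:ℂ)^2) * uu_sq n - hDC2
      exact inv_eq_of_mul_eq_one_right key
  | mul x y _ _ hx hy =>
    obtain ⟨p, q, rfl⟩ := hx; obtain ⟨r, s, rfl⟩ := hy
    refine ⟨p * r - n * q * s, p * s + r * q, ?_⟩
    push_cast
    linear_combination ((q : ℂ) * (s : ℂ)) * uu_sq n

lemma int_of_real {n : ℕ} (hn : 0 < n) {z : ℂ} (hz : z ∈ quadIntRing n)
    (hr : (starRingEnd ℂ) z = z) : ∃ m : ℤ, z = (m : ℂ) := by
  rw [mem_quadIntRing_iff] at hz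
  obtain ⟨x, y, rfl⟩ := exists_rat hn hz.1
  have hy : (y : ℂ) = 0 := by
    have h1 : (starRingEnd ℂ) ((x : ℂ) + (y : ℂ) * uu n) = (x : ℂ) - (y : ℂ) * uu n := by
      rw [map_add, _root_.map_mul, conj_uu, map_ratCast, map_ratCast]
      ring
    rw [h1] at hr
    have h2 : (2 : ℂ) * (y : ℂ) * uu n = 0 := by linear_combination -hr
    rcases mul_eq_zero.mp h2 with h3 | h3
    · rcases mul_eq_zero.mp h3 with h4 | h4
      · norm_num at h4
      · exact h4
    · exact absurd h3 (uu_ne hn)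
  rw [hy, zero_mul, add_zero] at hz hr ⊢
  have hint : IsIntegral ℤ ((x : ℚ) : ℂ) := by exact_mod_cast hz.2
  have hmap : algebraMap ℚ ℂ x = (x : ℂ) := by
    simp [eq_ratCast]
  have hx : IsIntegral ℤ x := IsIntegral.tower_bot (algebraMap ℚ ℂ).injective (by rwa [hmap])
  obtain ⟨m, hm⟩ := IsIntegrallyClosed.isIntegral_iff.mp hx
  exact ⟨m, by rw [← hm]; push_cast; norm_num⟩

lemma trace_int {n : ℕ} (hn : 0 < n) {z : ℂ} (hz : z ∈ quadIntRing n) :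
    ∃ m : ℤ, z + (starRingEnd ℂ) z = (m : ℂ) := by
  have hw : z + (starRingEnd ℂ) z ∈ quadIntRing n := add_mem hz (conj_mem hz)
  refine int_of_real hn hw ?_
  rw [map_add, Complex.conj_conj]
  ring

lemma norm_int {n : ℕ} (hn : 0 < n) {z : ℂ} (hz : z ∈ quadIntRing n) :
    ∃ m : ℤ, z * (starRingEnd ℂ) z = (m : ℂ) := by
  have hw : z * (starRingEnd ℂ) z ∈ quadIntRing n := mul_mem hz (conj_mem hz)
  refine int_of_real hn hw ?_
  rw [_root_.map_mul, Complex.conj_conj]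
  ring

lemma key_trace {n : ℕ} (hn : 0 < n) (hsf : Squarefree n) {z : ℂ} (hz : z ∈ quadIntRing n) :
    ∃ m : ℤ, uu n * z + (starRingEnd ℂ) (uu n * z) = (n : ℂ) * (m : ℂ) := by
  obtain ⟨t, ht⟩ := trace_int hn (mul_mem (uu_mem n) hz)
  obtain ⟨T, hT⟩ := trace_int hn hz
  obtain ⟨N, hN⟩ := norm_int hn hz
  have ht' : uu n * z - uu n * (starRingEnd ℂ) z = (t : ℂ) := by
    rw [← ht, _root_.map_mul, conj_uu]
    ring
  have hsq : (t : ℂ) ^ 2 = (n : ℂ) * (4 * (N : ℂ) - (T : ℂ) ^ 2) := by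
    linear_combination (-(uu n * z - uu n * (starRingEnd ℂ) z + (t:ℂ))) * ht' +
      ((z - (starRingEnd ℂ) z)^2) * uu_sq n +
      (-(n:ℂ) * (z + (starRingEnd ℂ) z + (T:ℂ))) * hT + (4*(n:ℂ)) * hN
  have hZ : t ^ 2 = (n : ℤ) * (4 * N - T ^ 2) := by exact_mod_cast hsq
  have hdvd : (n : ℤ) ∣ t := by
    have hsfZ : Squarefree (n : ℤ) := Int.squarefree_natCast.mpr hsf
    exact (hsfZ.dvd_pow_iff_dvd two_ne_zero).mp ⟨4 * N - T ^ 2, hZ⟩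
  obtain ⟨m, hm⟩ := hdvd
  refine ⟨m, ?_⟩
  rw [ht]
  rw [hm]
  push_cast
  ring


def Good (n : ℕ) (g : Matrix.SpecialLinearGroup (Fin 2) ℂ) : Prop :=
  g.1 0 0 ∈ quadIntRing n ∧ g.1 0 1 ∈ quadIntRing n ∧ g.1 1 0 ∈ quadIntRing n ∧
  g.1 1 1 ∈ quadIntRing n ∧
  (∃ s : ℤ, g.1 0 0 * uu n * (starRingEnd ℂ) (g.1 0 1)
      - g.1 0 1 * uu n * (starRingEnd ℂ) (g.1 0 0) = (n : ℂ) * (s : ℂ)) ∧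
  (∃ t : ℤ, g.1 1 0 * uu n * (starRingEnd ℂ) (g.1 1 1)
      - g.1 1 1 * uu n * (starRingEnd ℂ) (g.1 1 0) = (n : ℂ) * (t : ℂ)) ∧
  (∃ o ∈ quadIntRing n, g.1 0 0 * uu n * (starRingEnd ℂ) (g.1 1 1)
      - g.1 0 1 * uu n * (starRingEnd ℂ) (g.1 1 0) - uu n = (n : ℂ) * o)

lemma good_one (n : ℕ) : Good n 1 := by
  refine ⟨?_, ?_, ?_, ?_, ⟨0, ?_⟩, ⟨0, ?_⟩, ⟨0, zero_mem _, ?_⟩⟩ <;>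
    simp [Good, Matrix.SpecialLinearGroup.coe_one, Matrix.one_apply, one_mem, zero_mem]

lemma good_gen {n : ℕ} (hn : 0 < n) (hsf : Squarefree n) {α : ℂ} (hα : α ∈ quadIntRing n) :
    Good n (CohnMatrix α) := by
  have e00 : (CohnMatrix α).1 0 0 = α := rfl
  have e01 : (CohnMatrix α).1 0 1 = 1 := rfl
  have e10 : (CohnMatrix α).1 1 0 = -1 := rfl
  have e11 : (CohnMatrix α).1 1 1 = 0 := rfl
  obtain ⟨m, hm⟩ := key_trace hn hsf hα
  simp only [_root_.map_mul, conj_uu] at hm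
  refine ⟨?_, ?_, ?_, ?_, ⟨m, ?_⟩, ⟨0, ?_⟩, ⟨0, zero_mem _, ?_⟩⟩
  · rw [e00]; exact hα
  · rw [e01]; exact one_mem _
  · rw [e10]; exact neg_mem (one_mem _)
  · rw [e11]; exact zero_mem _
  · rw [e00, e01, _root_.map_one]
    linear_combination hm
  · rw [e10, e11, map_zero, map_neg, _root_.map_one]
    ring_nf
  · rw [e00, e01, e10, e11, map_zero, map_neg, _root_.map_one]
    ring_nf

lemma good_mul {n : ℕ} (hn : 0 < n) {x y : Matrix.SpecialLinearGroup (Fin 2) ℂ}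
    (hx : Good n x) (hy : Good n y) : Good n (x * y) := by
  obtain ⟨ma, mb, mc, md, ⟨s, hs⟩, ⟨t, ht⟩, ⟨o, ho, hoe⟩⟩ := hx
  obtain ⟨ma', mb', mc', md', ⟨s', hs'⟩, ⟨t', ht'⟩, ⟨o', ho', hoe'⟩⟩ := hy
  set a := x.1 0 0; set b := x.1 0 1; set c := x.1 1 0; set d := x.1 1 1
  set a' := y.1 0 0; set b' := y.1 0 1; set c' := y.1 1 0; set d' := y.1 1 1
  have eA : (x * y).1 0 0 = a * a' + b * c' := by
    show (x.1 * y.1) 0 0 = _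
    rw [Matrix.mul_apply, Fin.sum_univ_two]
  have eB : (x * y).1 0 1 = a * b' + b * d' := by
    show (x.1 * y.1) 0 1 = _
    rw [Matrix.mul_apply, Fin.sum_univ_two]
  have eC : (x * y).1 1 0 = c * a' + d * c' := by
    show (x.1 * y.1) 1 0 = _
    rw [Matrix.mul_apply, Fin.sum_univ_two]
  have eD : (x * y).1 1 1 = c * b' + d * d' := by
    show (x.1 * y.1) 1 1 = _
    rw [Matrix.mul_apply, Fin.sum_univ_two]
  -- conjugated version of hoe'
  have h3c : -((starRingEnd ℂ) a' * uu n * d') + (starRingEnd ℂ) b' * uu n * c' + uu n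
      = (n : ℂ) * (starRingEnd ℂ) o' := by
    have h := congrArg (starRingEnd ℂ) hoe'
    simp only [map_sub, _root_.map_mul, map_natCast, Complex.conj_conj, conj_uu] at h
    linear_combination h
  obtain ⟨m1, hm1⟩ := norm_int hn ma
  obtain ⟨m2, hm2⟩ := norm_int hn mb
  obtain ⟨m3, hm3⟩ := trace_int hn (mul_mem (mul_mem ma (conj_mem mb)) ho')
  simp only [_root_.map_mul, Complex.conj_conj] at hm3
  obtain ⟨m4, hm4⟩ := norm_int hn mc
  obtain ⟨m5, hm5⟩ := norm_int hn md
  obtain ⟨m6, hm6⟩ := trace_int hn (mul_mem (mul_mem mc (conj_mem md)) ho')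
  simp only [_root_.map_mul, Complex.conj_conj] at hm6
  refine ⟨?_, ?_, ?_, ?_, ⟨s + m1 * s' + m2 * t' + m3, ?_⟩,
    ⟨t + m4 * s' + m5 * t' + m6, ?_⟩,
    ⟨o + (a * (starRingEnd ℂ) c) * s' + (a * (starRingEnd ℂ) d) * o'
      + (b * (starRingEnd ℂ) c) * (starRingEnd ℂ) o' + (b * (starRingEnd ℂ) d) * t', ?_, ?_⟩⟩
  · rw [eA]; exact add_mem (mul_mem ma ma') (mul_mem mb mc')
  · rw [eB]; exact add_mem (mul_mem ma mb') (mul_mem mb md')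
  · rw [eC]; exact add_mem (mul_mem mc ma') (mul_mem md mc')
  · rw [eD]; exact add_mem (mul_mem mc mb') (mul_mem md md')
  · rw [eA, eB]
    simp only [map_add, _root_.map_mul]
    push_cast
    linear_combination hs + (a * (starRingEnd ℂ) a) * hs' + (b * (starRingEnd ℂ) b) * ht'
      + (a * (starRingEnd ℂ) b) * hoe' + ((starRingEnd ℂ) a * b) * h3c
      + ((n : ℂ) * (s' : ℂ)) * hm1 + ((n : ℂ) * (t' : ℂ)) * hm2 + (n : ℂ) * hm3
  · rw [eC, eD]
    simp only [map_add, _root_.map_mul]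
    push_cast
    linear_combination ht + (c * (starRingEnd ℂ) c) * hs' + (d * (starRingEnd ℂ) d) * ht'
      + (c * (starRingEnd ℂ) d) * hoe' + ((starRingEnd ℂ) c * d) * h3c
      + ((n : ℂ) * (s' : ℂ)) * hm4 + ((n : ℂ) * (t' : ℂ)) * hm5 + (n : ℂ) * hm6
  · refine add_mem (add_mem (add_mem (add_mem ho ?_) ?_) ?_) ?_
    · exact mul_mem (mul_mem ma (conj_mem mc)) (intCast_mem _ s')
    · exact mul_mem (mul_mem ma (conj_mem md)) ho'
    · exact mul_mem (mul_mem mb (conj_mem mc)) (conj_mem ho')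
    · exact mul_mem (mul_mem mb (conj_mem md)) (intCast_mem _ t')
  · rw [eA, eB, eC, eD]
    simp only [map_add, _root_.map_mul]
    linear_combination hoe + (a * (starRingEnd ℂ) c) * hs' + (a * (starRingEnd ℂ) d) * hoe'
      + (b * (starRingEnd ℂ) c) * h3c + (b * (starRingEnd ℂ) d) * ht'

lemma good_inv {n : ℕ} (hn : 0 < n) {x : Matrix.SpecialLinearGroup (Fin 2) ℂ}
    (hx : Good n x) : Good n x⁻¹ := by
  obtain ⟨ma, mb, mc, md, ⟨s, hs⟩, ⟨t, ht⟩, ⟨o, ho, hoe⟩⟩ := hx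
  set a := x.1 0 0; set b := x.1 0 1; set c := x.1 1 0; set d := x.1 1 1
  have einv := Matrix.SpecialLinearGroup.SL2_inv_expl x
  have eA : x⁻¹.1 0 0 = d := by rw [einv]; rfl
  have eB : x⁻¹.1 0 1 = -b := by rw [einv]; rfl
  have eC : x⁻¹.1 1 0 = -c := by rw [einv]; rfl
  have eD : x⁻¹.1 1 1 = a := by rw [einv]; rfl
  have hdet : a * d - b * c = 1 := by
    have h := x.2
    rw [Matrix.det_fin_two] at h
    exact h
  have hdetc : (starRingEnd ℂ) a * (starRingEnd ℂ) d - (starRingEnd ℂ) b * (starRingEnd ℂ) c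
      = 1 := by
    have h := congrArg (starRingEnd ℂ) hdet
    simp only [map_sub, _root_.map_mul, _root_.map_one] at h
    exact h
  have h3c : -((starRingEnd ℂ) a * uu n * d) + (starRingEnd ℂ) b * uu n * c + uu n
      = (n : ℂ) * (starRingEnd ℂ) o := by
    have h := congrArg (starRingEnd ℂ) hoe
    simp only [map_sub, _root_.map_mul, map_natCast, Complex.conj_conj, conj_uu] at h
    linear_combination h
  obtain ⟨m7, hm7⟩ := trace_int hn (mul_mem (mul_mem md (conj_mem mb)) ho)
  simp only [_root_.map_mul, Complex.conj_conj] at hm7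
  obtain ⟨m8, hm8⟩ := norm_int hn md
  obtain ⟨m9, hm9⟩ := norm_int hn mb
  obtain ⟨m10, hm10⟩ := trace_int hn (mul_mem (mul_mem mc (conj_mem ma)) ho)
  simp only [_root_.map_mul, Complex.conj_conj] at hm10
  obtain ⟨m11, hm11⟩ := norm_int hn mc
  obtain ⟨m12, hm12⟩ := norm_int hn ma
  refine ⟨?_, ?_, ?_, ?_, ⟨m7 - m8 * s - m9 * t, ?_⟩, ⟨m10 - m11 * s - m12 * t, ?_⟩,
    ⟨(d * (starRingEnd ℂ) c) * s - (d * (starRingEnd ℂ) a) * o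
      - (b * (starRingEnd ℂ) c) * (starRingEnd ℂ) o + ((starRingEnd ℂ) a * b) * t, ?_, ?_⟩⟩
  · rw [eA]; exact md
  · rw [eB]; exact neg_mem mb
  · rw [eC]; exact neg_mem mc
  · rw [eD]; exact ma
  · rw [eA, eB, map_neg]
    push_cast
    linear_combination (-(d * (starRingEnd ℂ) d)) * hs + (d * (starRingEnd ℂ) b) * hoe
      + ((starRingEnd ℂ) d * b) * h3c + (-(b * (starRingEnd ℂ) b)) * ht
      + (-(n : ℂ) * (s : ℂ)) * hm8 + (-(n : ℂ) * (t : ℂ)) * hm9 + (n : ℂ) * hm7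
  · rw [eC, eD, map_neg]
    push_cast
    linear_combination (-(c * (starRingEnd ℂ) c)) * hs + (c * (starRingEnd ℂ) a) * hoe
      + ((starRingEnd ℂ) c * a) * h3c + (-(a * (starRingEnd ℂ) a)) * ht
      + (-(n : ℂ) * (s : ℂ)) * hm11 + (-(n : ℂ) * (t : ℂ)) * hm12 + (n : ℂ) * hm10
  · refine add_mem (sub_mem (sub_mem (mul_mem (mul_mem md (conj_mem mc)) (intCast_mem _ s))
      (mul_mem (mul_mem md (conj_mem ma)) ho))
      (mul_mem (mul_mem mb (conj_mem mc)) (conj_mem ho)))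
      (mul_mem (mul_mem (conj_mem ma) mb) (intCast_mem _ t))
  · rw [eA, eB, eC, eD, map_neg]
    linear_combination (d * (starRingEnd ℂ) c) * hs - (d * (starRingEnd ℂ) a) * hoe
      - (b * (starRingEnd ℂ) c) * h3c + ((starRingEnd ℂ) a * b) * ht
      + (uu n * (a * d - b * c)) * hdetc + (uu n) * hdet


end CohnAux

/-- For `γ = [[a,b],[c,d]] ∈ 𝒲`: (i) `c·u·conj d − d·u·conj c ∈ nℤ`;
(ii) `a·u·conj b − b·u·conj a ∈ nℤ`; (iii) `a·u·conj d − b·u·conj c − u ∈ nO`,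
where `u = √−n`. -/
theorem cohnSubgroup_congruence (n : ℕ) (hsf : Squarefree n) (hn : 0 < n)
    (γ : Matrix.SpecialLinearGroup (Fin 2) ℂ) (hγ : γ ∈ CohnSubgroup n)
    (u : ℂ) (hu : u = Complex.I * (Real.sqrt n : ℂ))
    (a b c d : ℂ) (ha : a = γ.1 0 0) (hb : b = γ.1 0 1)
    (hc : c = γ.1 1 0) (hd : d = γ.1 1 1) :
    (∃ m : ℤ, c * u * (starRingEnd ℂ) d - d * u * (starRingEnd ℂ) c = (n : ℂ) * m) ∧
    (∃ m : ℤ, a * u * (starRingEnd ℂ) b - b * u * (starRingEnd ℂ) a = (n : ℂ) * m) ∧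
    (∃ o ∈ quadIntRing n, a * u * (starRingEnd ℂ) d - b * u * (starRingEnd ℂ) c - u
      = (n : ℂ) * o) := by
  have hgood : CohnAux.Good n γ := by
    refine Subgroup.closure_induction ?_ (CohnAux.good_one n) ?_ ?_ hγ
    · rintro g ⟨α, hα, rfl⟩
      exact CohnAux.good_gen hn hsf hα
    · intro g h _ _ hg hh
      exact CohnAux.good_mul hn hg hh
    · intro g _ hg
      exact CohnAux.good_inv hn hg
  obtain ⟨-, -, -, -, ⟨s, hs⟩, ⟨t, ht⟩, ⟨o, ho, hoe⟩⟩ := hgood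
  have hu' : u = CohnAux.uu n := hu
  subst ha hb hc hd
  rw [hu']
  exact ⟨⟨t, ht⟩, ⟨s, hs⟩, ⟨o, ho, hoe⟩⟩
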